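/- arXiv:1411.0858 — 2 statements merged into one kernel-verified Lean document; each statement's English description precedes it below -/
import Mathlib

section
/- Lower bound for the CUSUM of a one-change-point signal: let f be a vector on {s,...,e} taking value a on {s,...,η} and value b ≠ a on {η+1,...,e}, with n = e-s+1. Then max over s ≤ t < e of |f̃_{s,e}^t| = |f̃_{s,e}^η| = |b - a| sqrt((η-s+1)(e-η)/n). In particular, if η-s+1 ≥ δ and e-η ≥ δ, then |f̃_{s,e}^η| ≥ |b-a| sqrt(δ/2). -/
open Finset

/-- The CUSUM statistic of `f` on `[s,e]` at split point `t`. -/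
noncomputable def cusum (f : ℕ → ℝ) (s e t : ℕ) : ℝ :=
  Real.sqrt (((e : ℝ) - t) / (((e : ℝ) - s + 1) * ((t : ℝ) - s + 1))) *
      ∑ i ∈ Finset.Icc s t, f i
    - Real.sqrt (((t : ℝ) - s + 1) / (((e : ℝ) - s + 1) * ((e : ℝ) - t))) *
      ∑ i ∈ Finset.Icc (t + 1) e, f i

private lemma myKey1 (x y k : ℝ) (hx : 0 < x) (hk : 0 < k) :
    Real.sqrt (y / (k * x)) * x = Real.sqrt (x * y / k) := by
  have h : Real.sqrt (y / (k * x)) * x = Real.sqrt (y / (k * x)) * Real.sqrt (x ^ 2) := by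
    rw [Real.sqrt_sq hx.le]
  rw [h, ← Real.sqrt_mul' _ (by positivity)]
  congr 1; field_simp

private lemma myKey2 (A c : ℝ) (hc : 0 ≤ c) : Real.sqrt A * c = Real.sqrt (c ^ 2 * A) := by
  rw [Real.sqrt_mul (by positivity), Real.sqrt_sq hc, mul_comm]

private lemma mySum (f : ℕ → ℝ) (c : ℝ) (u v : ℕ) (h : ∀ i ∈ Finset.Icc u v, f i = c) :
    ∑ i ∈ Finset.Icc u v, f i = ((Finset.Icc u v).card : ℝ) * c := by
  rw [Finset.sum_congr rfl h, Finset.sum_const, nsmul_eq_mul]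

private lemma cusum_formula_left (f : ℕ → ℝ) (s e η : ℕ) (a b : ℝ)
    (hsη : s ≤ η) (hηe : η < e)
    (hfa : ∀ t ∈ Finset.Icc s η, f t = a)
    (hfb : ∀ t ∈ Finset.Icc (η + 1) e, f t = b)
    (t : ℕ) (hst : s ≤ t) (htη : t ≤ η) :
    cusum f s e t
      = Real.sqrt (((t : ℝ) - s + 1) / (((e : ℝ) - s + 1) * ((e : ℝ) - t)))
          * (((e : ℝ) - η) * (a - b)) := by
  have hte : t < e := lt_of_le_of_lt htη hηe
  have hp : (0:ℝ) < (t : ℝ) - s + 1 := by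
    have : (s:ℝ) ≤ t := Nat.cast_le.2 hst; linarith
  have hq : (0:ℝ) < (e : ℝ) - t := by
    have : (t:ℝ) + 1 ≤ e := by exact_mod_cast Nat.succ_le_of_lt hte
    linarith
  have hn : (0:ℝ) < (e : ℝ) - s + 1 := by
    have : (s:ℝ) ≤ e := Nat.cast_le.2 (le_of_lt (lt_of_le_of_lt hst hte)); linarith
  have sum1 : ∑ i ∈ Finset.Icc s t, f i = ((t : ℝ) - s + 1) * a := by
    rw [mySum f a s t (fun i hi => by
      rw [Finset.mem_Icc] at hi
      exact hfa i (Finset.mem_Icc.2 ⟨hi.1, le_trans hi.2 htη⟩))]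
    rw [Nat.card_Icc, Nat.cast_sub (by omega)]
    push_cast; ring
  have sum2 : ∑ i ∈ Finset.Icc (t + 1) e, f i
      = ((η : ℝ) - t) * a + ((e : ℝ) - η) * b := by
    rw [Finset.Icc_add_one_left_eq_Ioc, ← Finset.sum_Ioc_consecutive f htη (le_of_lt hηe)]
    have e1 : ∑ i ∈ Finset.Ioc t η, f i = ((η : ℝ) - t) * a := by
      have : Finset.Ioc t η = Finset.Icc (t + 1) η := (Finset.Icc_add_one_left_eq_Ioc t η).symm
      rw [this, mySum f a (t+1) η (fun i hi => by
        rw [Finset.mem_Icc] at hi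
        exact hfa i (Finset.mem_Icc.2 ⟨by omega, hi.2⟩))]
      rw [Nat.card_Icc, Nat.cast_sub (by omega)]
      push_cast; ring
    have e2 : ∑ i ∈ Finset.Ioc η e, f i = ((e : ℝ) - η) * b := by
      have : Finset.Ioc η e = Finset.Icc (η + 1) e := (Finset.Icc_add_one_left_eq_Ioc η e).symm
      rw [this, mySum f b (η+1) e hfb]
      rw [Nat.card_Icc, Nat.cast_sub (by omega)]
      push_cast; ring
    rw [e1, e2]
  unfold cusum
  rw [sum1, sum2]
  have k1 := myKey1 ((t:ℝ)-s+1) ((e:ℝ)-t) ((e:ℝ)-s+1) hp hn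
  have k2 := myKey1 ((e:ℝ)-t) ((t:ℝ)-s+1) ((e:ℝ)-s+1) hq hn
  have e1 : Real.sqrt (((e:ℝ)-t) / (((e:ℝ)-s+1) * ((t:ℝ)-s+1))) * ((t:ℝ)-s+1)
      = Real.sqrt (((t:ℝ)-s+1) / (((e:ℝ)-s+1) * ((e:ℝ)-t))) * ((e:ℝ)-t) := by
    rw [k1, k2, mul_comm ((t:ℝ)-s+1) ((e:ℝ)-t)]
  linear_combination a * e1

private lemma cusum_formula_right (f : ℕ → ℝ) (s e η : ℕ) (a b : ℝ)
    (hsη : s ≤ η) (hηe : η < e)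
    (hfa : ∀ t ∈ Finset.Icc s η, f t = a)
    (hfb : ∀ t ∈ Finset.Icc (η + 1) e, f t = b)
    (t : ℕ) (hηt : η ≤ t) (hte : t < e) :
    cusum f s e t
      = Real.sqrt (((e : ℝ) - t) / (((e : ℝ) - s + 1) * ((t : ℝ) - s + 1)))
          * (((η : ℝ) - s + 1) * (a - b)) := by
  have hst : s ≤ t := le_trans hsη hηt
  have hp : (0:ℝ) < (t : ℝ) - s + 1 := by
    have : (s:ℝ) ≤ t := Nat.cast_le.2 hst; linarith
  have hq : (0:ℝ) < (e : ℝ) - t := by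
    have : (t:ℝ) + 1 ≤ e := by exact_mod_cast Nat.succ_le_of_lt hte
    linarith
  have hn : (0:ℝ) < (e : ℝ) - s + 1 := by
    have : (s:ℝ) ≤ e := Nat.cast_le.2 (le_of_lt (lt_of_le_of_lt hst hte)); linarith
  have sum1 : ∑ i ∈ Finset.Icc s t, f i
      = ((η : ℝ) - s + 1) * a + ((t : ℝ) - η) * b := by
    have hsplit : ∑ i ∈ Finset.Icc s t, f i
        = ∑ i ∈ Finset.Icc s η, f i + ∑ i ∈ Finset.Ioc η t, f i := by
      rw [← Finset.sum_union (by
        simp only [Finset.disjoint_left, Finset.mem_Icc, Finset.mem_Ioc]; omega)]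
      congr 1
      ext i; simp only [Finset.mem_Icc, Finset.mem_union, Finset.mem_Ioc]; omega
    rw [hsplit]
    have e1 : ∑ i ∈ Finset.Icc s η, f i = ((η : ℝ) - s + 1) * a := by
      rw [mySum f a s η hfa, Nat.card_Icc, Nat.cast_sub (by omega)]
      push_cast; ring
    have e2 : ∑ i ∈ Finset.Ioc η t, f i = ((t : ℝ) - η) * b := by
      have : Finset.Ioc η t = Finset.Icc (η + 1) t := (Finset.Icc_add_one_left_eq_Ioc η t).symm
      rw [this, mySum f b (η+1) t (fun i hi => by
        rw [Finset.mem_Icc] at hi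
        exact hfb i (Finset.mem_Icc.2 ⟨hi.1, le_trans hi.2 (le_of_lt hte)⟩))]
      rw [Nat.card_Icc, Nat.cast_sub (by omega)]
      push_cast; ring
    rw [e1, e2]
  have sum2 : ∑ i ∈ Finset.Icc (t + 1) e, f i = ((e : ℝ) - t) * b := by
    rw [mySum f b (t+1) e (fun i hi => by
      rw [Finset.mem_Icc] at hi
      exact hfb i (Finset.mem_Icc.2 ⟨by omega, hi.2⟩))]
    rw [Nat.card_Icc, Nat.cast_sub (by omega)]
    push_cast; ring
  unfold cusum
  rw [sum1, sum2]
  have k1 := myKey1 ((t:ℝ)-s+1) ((e:ℝ)-t) ((e:ℝ)-s+1) hp hn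
  have k2 := myKey1 ((e:ℝ)-t) ((t:ℝ)-s+1) ((e:ℝ)-s+1) hq hn
  have e1 : Real.sqrt (((e:ℝ)-t) / (((e:ℝ)-s+1) * ((t:ℝ)-s+1))) * ((t:ℝ)-s+1)
      = Real.sqrt (((t:ℝ)-s+1) / (((e:ℝ)-s+1) * ((e:ℝ)-t))) * ((e:ℝ)-t) := by
    rw [k1, k2, mul_comm ((t:ℝ)-s+1) ((e:ℝ)-t)]
  linear_combination b * e1

/-- Lower bound for the CUSUM of a one-change-point signal: the maximum of `|f̃_{s,e}^t|`
is attained at the change-point `η` and equals `|b-a| √((η-s+1)(e-η)/n)`; in particular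
if both `η-s+1 ≥ δ` and `e-η ≥ δ` then `|f̃_{s,e}^η| ≥ |b-a| √(δ/2)`. -/
theorem cusum_one_change_point_lower_bound (f : ℕ → ℝ) (s e η : ℕ) (a b : ℝ)
    (hsη : s ≤ η) (hηe : η < e) (hab : a ≠ b)
    (hfa : ∀ t ∈ Finset.Icc s η, f t = a)
    (hfb : ∀ t ∈ Finset.Icc (η + 1) e, f t = b)
    (δ : ℝ) (hδ : 0 ≤ δ) (h1 : δ ≤ (η : ℝ) - s + 1) (h2 : δ ≤ (e : ℝ) - η) :
    (∀ t ∈ Finset.Icc s (e - 1), |cusum f s e t| ≤ |cusum f s e η|) ∧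
    |cusum f s e η|
      = |b - a| * Real.sqrt (((η : ℝ) - s + 1) * ((e : ℝ) - η) / ((e : ℝ) - s + 1)) ∧
    |b - a| * Real.sqrt (δ / 2) ≤ |cusum f s e η| := by
  have hse : s < e := lt_of_le_of_lt hsη hηe
  have hpη : (0:ℝ) < (η : ℝ) - s + 1 := by
    have : (s:ℝ) ≤ η := Nat.cast_le.2 hsη; linarith
  have hqη : (0:ℝ) < (e : ℝ) - η := by
    have : (η:ℝ) + 1 ≤ e := by exact_mod_cast Nat.succ_le_of_lt hηe
    linarith
  have hn : (0:ℝ) < (e : ℝ) - s + 1 := by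
    have : (s:ℝ) ≤ e := Nat.cast_le.2 hse.le; linarith
  have hη : cusum f s e η
      = Real.sqrt (((η : ℝ) - s + 1) / (((e : ℝ) - s + 1) * ((e : ℝ) - η)))
          * (((e : ℝ) - η) * (a - b)) :=
    cusum_formula_left f s e η a b hsη hηe hfa hfb η hsη le_rfl
  have k : Real.sqrt (((η : ℝ) - s + 1) / (((e : ℝ) - s + 1) * ((e : ℝ) - η))) * ((e : ℝ) - η)
      = Real.sqrt (((η : ℝ) - s + 1) * ((e : ℝ) - η) / ((e : ℝ) - s + 1)) := by
    rw [myKey1 ((e:ℝ)-η) (((η:ℝ)-s+1)) ((e:ℝ)-s+1) hqη hn, mul_comm ((e:ℝ)-η) _]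
  have habsη : |cusum f s e η|
      = |a - b| * Real.sqrt (((η : ℝ) - s + 1) * ((e : ℝ) - η) / ((e : ℝ) - s + 1)) := by
    rw [hη, abs_mul, abs_mul, abs_of_nonneg (Real.sqrt_nonneg _), abs_of_nonneg hqη.le]
    linear_combination |a - b| * k
  have hab' : |b - a| = |a - b| := abs_sub_comm b a
  refine ⟨?_, ?_, ?_⟩
  · intro t ht
    rw [Finset.mem_Icc] at ht
    have hst : s ≤ t := ht.1
    have hte : t < e := by omega
    have hp : (0:ℝ) < (t : ℝ) - s + 1 := by
      have : (s:ℝ) ≤ t := Nat.cast_le.2 hst; linarith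
    have hq : (0:ℝ) < (e : ℝ) - t := by
      have : (t:ℝ) + 1 ≤ e := by exact_mod_cast Nat.succ_le_of_lt hte
      linarith
    rw [habsη]
    rcases le_or_gt t η with htη | hηt
    · have hform := cusum_formula_left f s e η a b hsη hηe hfa hfb t hst htη
      have hppη : (t : ℝ) - s + 1 ≤ (η : ℝ) - s + 1 := by
        have : (t:ℝ) ≤ η := Nat.cast_le.2 htη; linarith
      have hqqη : (e : ℝ) - η ≤ (e : ℝ) - t := by
        have : (t:ℝ) ≤ η := Nat.cast_le.2 htη; linarith
      have hle : Real.sqrt (((t : ℝ) - s + 1) / (((e : ℝ) - s + 1) * ((e : ℝ) - t)))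
            * ((e : ℝ) - η)
          ≤ Real.sqrt (((η : ℝ) - s + 1) * ((e : ℝ) - η) / ((e : ℝ) - s + 1)) := by
        rw [myKey2 _ ((e:ℝ)-η) hqη.le]
        apply Real.sqrt_le_sqrt
        rw [show ((e:ℝ)-η) ^ 2 * (((t : ℝ) - s + 1) / (((e : ℝ) - s + 1) * ((e : ℝ) - t)))
            = (((e:ℝ)-η) ^ 2 * ((t : ℝ) - s + 1)) / (((e : ℝ) - s + 1) * ((e : ℝ) - t))
          from by ring,
          div_le_div_iff₀ (mul_pos hn hq) hn]
        nlinarith [mul_le_mul hppη hqqη hqη.le hpη.le, mul_nonneg hn.le hqη.le]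
      calc |cusum f s e t|
          = Real.sqrt (((t : ℝ) - s + 1) / (((e : ℝ) - s + 1) * ((e : ℝ) - t)))
              * ((e : ℝ) - η) * |a - b| := by
            rw [hform, abs_mul, abs_mul, abs_of_nonneg (Real.sqrt_nonneg _),
              abs_of_nonneg hqη.le]; ring
        _ ≤ Real.sqrt (((η : ℝ) - s + 1) * ((e : ℝ) - η) / ((e : ℝ) - s + 1)) * |a - b| :=
            mul_le_mul_of_nonneg_right hle (abs_nonneg _)
        _ = |a - b| * Real.sqrt (((η : ℝ) - s + 1) * ((e : ℝ) - η) / ((e : ℝ) - s + 1)) :=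
            mul_comm _ _
    · have hform := cusum_formula_right f s e η a b hsη hηe hfa hfb t hηt.le hte
      have hppη : (η : ℝ) - s + 1 ≤ (t : ℝ) - s + 1 := by
        have : (η:ℝ) ≤ t := Nat.cast_le.2 hηt.le; linarith
      have hqqη : (e : ℝ) - t ≤ (e : ℝ) - η := by
        have : (η:ℝ) ≤ t := Nat.cast_le.2 hηt.le; linarith
      have hle : Real.sqrt (((e : ℝ) - t) / (((e : ℝ) - s + 1) * ((t : ℝ) - s + 1)))
            * ((η : ℝ) - s + 1)
          ≤ Real.sqrt (((η : ℝ) - s + 1) * ((e : ℝ) - η) / ((e : ℝ) - s + 1)) := by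
        rw [myKey2 _ (((η:ℝ)-s+1)) hpη.le]
        apply Real.sqrt_le_sqrt
        rw [show ((η:ℝ)-s+1) ^ 2 * (((e : ℝ) - t) / (((e : ℝ) - s + 1) * ((t : ℝ) - s + 1)))
            = (((η:ℝ)-s+1) ^ 2 * ((e : ℝ) - t)) / (((e : ℝ) - s + 1) * ((t : ℝ) - s + 1))
          from by ring,
          div_le_div_iff₀ (mul_pos hn hp) hn]
        nlinarith [mul_le_mul hppη hqqη hq.le hp.le, mul_nonneg hn.le hpη.le]
      calc |cusum f s e t|
          = Real.sqrt (((e : ℝ) - t) / (((e : ℝ) - s + 1) * ((t : ℝ) - s + 1)))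
              * ((η : ℝ) - s + 1) * |a - b| := by
            rw [hform, abs_mul, abs_mul, abs_of_nonneg (Real.sqrt_nonneg _),
              abs_of_nonneg hpη.le]; ring
        _ ≤ Real.sqrt (((η : ℝ) - s + 1) * ((e : ℝ) - η) / ((e : ℝ) - s + 1)) * |a - b| :=
            mul_le_mul_of_nonneg_right hle (abs_nonneg _)
        _ = |a - b| * Real.sqrt (((η : ℝ) - s + 1) * ((e : ℝ) - η) / ((e : ℝ) - s + 1)) :=
            mul_comm _ _
  · rw [habsη, hab']
  · rw [habsη, hab']
    refine mul_le_mul_of_nonneg_left (Real.sqrt_le_sqrt ?_) (abs_nonneg _)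
    rw [div_le_div_iff₀ (by norm_num) hn]
    nlinarith [mul_le_mul_of_nonneg_right h2 hpη.le, mul_le_mul_of_nonneg_right h1 hqη.le]
end

section
/- Exact value of the CUSUM inner product for a one-jump signal: let f on {s,...,e} equal a on {s,...,η} and b on {η+1,...,e} with s ≤ η < e and n = e-s+1. Then f̃_{s,e}^η = (a - b) · sqrt((η - s + 1)(e - η) / n). -/
open Finset

lemma sqrt_aux (P Q N : ℝ) (hP : 0 < P) (hQ : 0 < Q) (hN : 0 < N) :
    Real.sqrt (Q / (N * P)) * P = Real.sqrt (P * Q / N) := by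
  have : Real.sqrt (Q / (N * P)) * P = Real.sqrt (Q / (N * P)) * Real.sqrt (P ^ 2) := by
    rw [Real.sqrt_sq hP.le]
  rw [this, ← Real.sqrt_mul (by positivity)]
  congr 1
  field_simp

/-- Exact value of the CUSUM inner product for a one-jump signal: if `f = a` on `{s,…,η}`
and `f = b` on `{η+1,…,e}`, then `f̃_{s,e}^η = (a - b) √((η-s+1)(e-η)/n)`. -/
theorem cusum_one_jump_value (f : ℕ → ℝ) (s e η : ℕ) (a b : ℝ)
    (hsη : s ≤ η) (hηe : η < e)
    (hfa : ∀ t ∈ Finset.Icc s η, f t = a)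
    (hfb : ∀ t ∈ Finset.Icc (η + 1) e, f t = b) :
    cusum f s e η
      = (a - b) * Real.sqrt (((η : ℝ) - s + 1) * ((e : ℝ) - η) / ((e : ℝ) - s + 1)) := by
  have hsum1 : ∑ i ∈ Finset.Icc s η, f i = ((η : ℝ) - s + 1) * a := by
    rw [Finset.sum_congr rfl hfa, Finset.sum_const, Nat.card_Icc, nsmul_eq_mul]
    have : ((η + 1 - s : ℕ) : ℝ) = (η : ℝ) - s + 1 := by
      push_cast [Nat.cast_sub (by omega : s ≤ η + 1)]; ring
    rw [this]
  have hsum2 : ∑ i ∈ Finset.Icc (η + 1) e, f i = ((e : ℝ) - η) * b := by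
    rw [Finset.sum_congr rfl hfb, Finset.sum_const, Nat.card_Icc, nsmul_eq_mul]
    have h : e + 1 - (η + 1) = e - η := by omega
    rw [h, Nat.cast_sub hηe.le]
  have hP : (0 : ℝ) < (η : ℝ) - s + 1 := by
    have : (s : ℝ) ≤ η := by exact_mod_cast hsη
    linarith
  have hQ : (0 : ℝ) < (e : ℝ) - η := by
    have : (η : ℝ) < e := by exact_mod_cast hηe
    linarith
  have hN : (0 : ℝ) < (e : ℝ) - s + 1 := by
    have : (s : ℝ) ≤ e := by exact_mod_cast (hsη.trans hηe.le)
    linarith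
  have h1 := sqrt_aux ((η : ℝ) - s + 1) ((e : ℝ) - η) ((e : ℝ) - s + 1) hP hQ hN
  have h2 := sqrt_aux ((e : ℝ) - η) ((η : ℝ) - s + 1) ((e : ℝ) - s + 1) hQ hP hN
  rw [cusum, hsum1, hsum2]
  have hcomm : ((e : ℝ) - η) * ((η : ℝ) - s + 1) = ((η : ℝ) - s + 1) * ((e : ℝ) - η) := by ring
  rw [hcomm] at h2
  linear_combination a * h1 - b * h2
end
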